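/- Distributivity over disjunction holds up to ready simulation equivalence: for each ⊙ ∈ {□, ∥_A, ∧} and all processes p₁, p₂, p₃ of the recursion-free calculus CLL, p₁ ⊙ (p₂ ∨ p₃) =_RS (p₁ ⊙ p₂) ∨ (p₁ ⊙ p₃). -/

import Mathlib

open Classical

/-- Visible actions plus the invisible action τ. -/
inductive ActT (Act : Type) : Type where
  | act : Act → ActT Act
  | tau : ActT Act

/-- Processes of the recursion-free calculus CLL. -/
inductive Proc (Act : Type) : Type where
  | nil  : Proc Act                                -- 0
  | bot  : Proc Act                                -- ⊥
  | pre  : ActT Act → Proc Act → Proc Act          -- α.t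
  | ec   : Proc Act → Proc Act → Proc Act          -- t □ t
  | conj : Proc Act → Proc Act → Proc Act          -- t ∧ t
  | disj : Proc Act → Proc Act → Proc Act          -- t ∨ t
  | par  : Set Act → Proc Act → Proc Act → Proc Act -- t ∥_A t

namespace Proc

variable {Act : Type}

/-- Whether a process has a τ-transition (structural stratification used for
the negative premises of the SOS rules). -/
def hasTau : Proc Act → Prop
  | nil => False
  | bot => False
  | pre a _ => a = ActT.tau
  | ec t₁ t₂ => hasTau t₁ ∨ hasTau t₂
  | conj t₁ t₂ => hasTau t₁ ∨ hasTau t₂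
  | disj _ _ => True
  | par _ t₁ t₂ => hasTau t₁ ∨ hasTau t₂

/-- The transition relation, given by the SOS rules of CLL_R. -/
inductive Trans : Proc Act → ActT Act → Proc Act → Prop where
  | pre : Trans (pre α t) α t
  | ecL : Trans t₁ (ActT.act a) t₁' → ¬ hasTau t₂ →
      Trans (ec t₁ t₂) (ActT.act a) t₁'
  | ecR : ¬ hasTau t₁ → Trans t₂ (ActT.act a) t₂' →
      Trans (ec t₁ t₂) (ActT.act a) t₂'
  | ecTauL : Trans t₁ ActT.tau t₁' → Trans (ec t₁ t₂) ActT.tau (ec t₁' t₂)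
  | ecTauR : Trans t₂ ActT.tau t₂' → Trans (ec t₁ t₂) ActT.tau (ec t₁ t₂')
  | conjAct : Trans t₁ (ActT.act a) t₁' → Trans t₂ (ActT.act a) t₂' →
      Trans (conj t₁ t₂) (ActT.act a) (conj t₁' t₂')
  | conjTauL : Trans t₁ ActT.tau t₁' → Trans (conj t₁ t₂) ActT.tau (conj t₁' t₂)
  | conjTauR : Trans t₂ ActT.tau t₂' → Trans (conj t₁ t₂) ActT.tau (conj t₁ t₂')
  | disjL : Trans (disj t₁ t₂) ActT.tau t₁
  | disjR : Trans (disj t₁ t₂) ActT.tau t₂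
  | parTauL : Trans t₁ ActT.tau t₁' → Trans (par A t₁ t₂) ActT.tau (par A t₁' t₂)
  | parTauR : Trans t₂ ActT.tau t₂' → Trans (par A t₁ t₂) ActT.tau (par A t₁ t₂')
  | parL : a ∉ A → Trans t₁ (ActT.act a) t₁' → ¬ hasTau t₂ →
      Trans (par A t₁ t₂) (ActT.act a) (par A t₁' t₂)
  | parR : a ∉ A → ¬ hasTau t₁ → Trans t₂ (ActT.act a) t₂' →
      Trans (par A t₁ t₂) (ActT.act a) (par A t₁ t₂')
  | parSync : a ∈ A → Trans t₁ (ActT.act a) t₁' → Trans t₂ (ActT.act a) t₂' →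
      Trans (par A t₁ t₂) (ActT.act a) (par A t₁' t₂')

/-- The ready set I(p). -/
def ready (p : Proc Act) : Set (ActT Act) := {α | ∃ q, Trans p α q}

/-- p is stable if it has no τ-transition. -/
def Stable (p : Proc Act) : Prop := ∀ q, ¬ Trans p ActT.tau q

/-- The inconsistency predicate F, as the least predicate closed under the
predicative rules of CLL_R. -/
inductive Fp : Proc Act → Prop where
  | bot : Fp bot
  | pre : Fp t → Fp (pre α t)
  | disj : Fp t₁ → Fp t₂ → Fp (disj t₁ t₂)
  | ecL : Fp t₁ → Fp (ec t₁ t₂)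
  | ecR : Fp t₂ → Fp (ec t₁ t₂)
  | parL : Fp t₁ → Fp (par A t₁ t₂)
  | parR : Fp t₂ → Fp (par A t₁ t₂)
  | conjL : Fp t₁ → Fp (conj t₁ t₂)
  | conjR : Fp t₂ → Fp (conj t₁ t₂)
  | conjReady : Stable (conj t₁ t₂) → ready t₁ ≠ ready t₂ → Fp (conj t₁ t₂)
  | conjSucc : Trans (conj t₁ t₂) α s → (∀ y, Trans (conj t₁ t₂) α y → Fp y) →
      Fp (conj t₁ t₂)
  | conjStable :
      (∀ y, Relation.ReflTransGen (fun x z => Trans x ActT.tau z) (conj t₁ t₂) y →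
        Stable y → Fp y) →
      Fp (conj t₁ t₂)

/-- One τ-step with both endpoints consistent. -/
def tauStepF (p q : Proc Act) : Prop := Trans p ActT.tau q ∧ ¬ Fp p ∧ ¬ Fp q

/-- p ⇒_F| q : a sequence of τ-transitions from p to q, all states outside F,
with q stable. -/
def epsF (p q : Proc Act) : Prop :=
  Relation.ReflTransGen tauStepF p q ∧ ¬ Fp p ∧ ¬ Fp q ∧ Stable q

/-- p =a⇒_F| q. -/
def wkF (a : Act) (p q : Proc Act) : Prop :=
  ∃ r s, Relation.ReflTransGen tauStepF p r ∧ ¬ Fp p ∧ ¬ Fp r ∧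
    Trans r (ActT.act a) s ∧ ¬ Fp s ∧
    Relation.ReflTransGen tauStepF s q ∧ ¬ Fp q ∧ Stable q

/-- R is a stable ready simulation. -/
def StableRS (R : Proc Act → Proc Act → Prop) : Prop :=
  ∀ p q, R p q →
    Stable p ∧ Stable q ∧
    (¬ Fp p → ¬ Fp q) ∧
    (∀ a p', wkF a p p' → ∃ q', wkF a q q' ∧ R p' q') ∧
    (¬ Fp p → ready p = ready q)

/-- p ⊏̃_RS q. -/
def rsLT (p q : Proc Act) : Prop := ∃ R, StableRS R ∧ R p q

/-- p ⊑_RS q. -/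
def rsLE (p q : Proc Act) : Prop :=
  ∀ p', epsF p p' → ∃ q', epsF q q' ∧ rsLT p' q'

/-- p =_RS q. -/
def rsEq (p q : Proc Act) : Prop := rsLE p q ∧ rsLE q p

/-- Basic process terms T(Σ_B): no ⊥ and no ∧. -/
inductive Basic : Proc Act → Prop where
  | nil : Basic nil
  | pre : Basic t → Basic (pre α t)
  | disj : Basic t₁ → Basic t₂ → Basic (disj t₁ t₂)
  | ec : Basic t₁ → Basic t₂ → Basic (ec t₁ t₂)
  | par : Basic t₁ → Basic t₂ → Basic (par A t₁ t₂)

/-- General external choice □ over a finite sequence (left-nested). -/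
def ecList : List (Proc Act) → Proc Act
  | [] => nil
  | t :: ts => ts.foldl ec t

/-- General disjunction ⋁ over a nonempty finite sequence (left-nested). -/
def djList : List (Proc Act) → Proc Act
  | [] => bot
  | t :: ts => ts.foldl disj t

/-- □_{i<n} a_i.t_i for a sequence of prefixed terms. -/
def ecPre (l : List (Act × Proc Act)) : Proc Act :=
  ecList (l.map fun x => pre (ActT.act x.1) x.2)

/-- The expansion term E = ((□Ω₁) □ (□Ω₂)) □ (□Ω₃). -/
noncomputable def expTerm (A : Set Act) (l₁ l₂ : List (Act × Proc Act)) : Proc Act :=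
  ec (ec
      (ecList ((l₁.filter fun x => decide (x.1 ∉ A)).map
        fun x => pre (ActT.act x.1) (par A x.2 (ecPre l₂))))
      (ecList ((l₂.filter fun x => decide (x.1 ∉ A)).map
        fun x => pre (ActT.act x.1) (par A (ecPre l₁) x.2))))
    (ecList (l₁.flatMap fun x =>
      (l₂.filter fun y => decide (y.1 = x.1 ∧ x.1 ∈ A)).map
        fun y => pre (ActT.act x.1) (par A x.2 y.2)))

/-- Normal forms NF_B. -/
inductive NFB : Proc Act → Prop where
  | mk (ls : List (List (Act × Proc Act))) (hne : ls ≠ [])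
      (hnodup : ∀ l ∈ ls, (l.map Prod.fst).Nodup)
      (hsub : ∀ l ∈ ls, ∀ x ∈ l, NFB x.2) :
      NFB (djList (ls.map ecPre))

/-- NF = NF_B ∪ {⊥}. -/
def NF (p : Proc Act) : Prop := NFB p ∨ p = bot

/-- Derivability ⊢ t ≤ t' in the proof system AX_CLL. -/
inductive Deriv : Proc Act → Proc Act → Prop where
  | refl (t) : Deriv t t
  | trans : Deriv t t' → Deriv t' t'' → Deriv t t''
  | mono_pre : Deriv t t' → Deriv (pre α t) (pre α t')
  | mono_ec : Deriv s s' → Deriv t t' → Deriv (ec s t) (ec s' t')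
  | mono_conj : Deriv s s' → Deriv t t' → Deriv (conj s t) (conj s' t')
  | mono_disj : Deriv s s' → Deriv t t' → Deriv (disj s t) (disj s' t')
  | mono_par : Deriv s s' → Deriv t t' → Deriv (par A s t) (par A s' t')
  -- external choice
  | ec_comm : Deriv (ec x y) (ec y x)
  | ec_assoc₁ : Deriv (ec (ec x y) z) (ec x (ec y z))
  | ec_assoc₂ : Deriv (ec x (ec y z)) (ec (ec x y) z)
  | ec_idem₁ : Deriv (ec x x) x
  | ec_idem₂ : Deriv x (ec x x)
  | ec_nil₁ : Deriv (ec x nil) x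
  | ec_nil₂ : Deriv x (ec x nil)
  | ec_bot₁ : Deriv (ec x bot) bot
  | ec_bot₂ : Deriv bot (ec x bot)
  -- disjunction
  | disj_comm : Deriv (disj x y) (disj y x)
  | disj_assoc₁ : Deriv (disj x (disj y z)) (disj (disj x y) z)
  | disj_assoc₂ : Deriv (disj (disj x y) z) (disj x (disj y z))
  | disj_idem₁ : Deriv (disj x x) x
  | disj_idem₂ : Deriv x (disj x x)
  | disj_bot₁ : Deriv (disj x bot) x
  | disj_bot₂ : Deriv x (disj x bot)
  | disj_le : Deriv x (disj x y)
  -- conjunction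
  | conj_comm : Deriv (conj x y) (conj y x)
  | conj_idem₁ : Deriv (conj x x) x
  | conj_idem₂ : Deriv x (conj x x)
  | conj_bot₁ : Deriv (conj x bot) bot
  | conj_bot₂ : Deriv bot (conj x bot)
  -- prefixing
  | pre_bot₁ : Deriv (pre (ActT.act a) bot) bot
  | pre_bot₂ : Deriv bot (pre (ActT.act a) bot)
  | tau_pre₁ : Deriv (pre ActT.tau x) x
  | tau_pre₂ : Deriv x (pre ActT.tau x)
  -- parallel
  | par_comm : Deriv (par A x y) (par A y x)
  | par_bot₁ : Deriv (par A x bot) bot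
  | par_bot₂ : Deriv bot (par A x bot)
  -- distribution over disjunction
  | ds_ec : Deriv (ec x (disj y z)) (disj (ec x y) (ec x z))
  | ds_conj : Deriv (conj x (disj y z)) (disj (conj x y) (conj x z))
  | ds_par : Deriv (par A x (disj y z)) (disj (par A x y) (par A x z))
  | ds_pre : Basic x → Basic y →
      Deriv (pre (ActT.act a) (disj x y)) (ec (pre (ActT.act a) x) (pre (ActT.act a) y))
  -- external choice and conjunction
  | ecc1₁ (l₁ l₂ : List (Act × Proc Act)) :
      {a | a ∈ l₁.map Prod.fst} ≠ {a | a ∈ l₂.map Prod.fst} →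
      Deriv (conj (ecPre l₁) (ecPre l₂)) bot
  | ecc1₂ (l₁ l₂ : List (Act × Proc Act)) :
      {a | a ∈ l₁.map Prod.fst} ≠ {a | a ∈ l₂.map Prod.fst} →
      Deriv bot (conj (ecPre l₁) (ecPre l₂))
  | ecc2 (l : List (Act × Proc Act × Proc Act)) :
      Deriv (ecPre (l.map fun x => (x.1, conj x.2.1 x.2.2)))
            (conj (ecPre (l.map fun x => (x.1, x.2.1)))
                  (ecPre (l.map fun x => (x.1, x.2.2))))
  | ecc3 (l : List (Act × Proc Act × Proc Act)) :
      (l.map Prod.fst).Nodup →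
      Deriv (conj (ecPre (l.map fun x => (x.1, x.2.1)))
                  (ecPre (l.map fun x => (x.1, x.2.2))))
            (ecPre (l.map fun x => (x.1, conj x.2.1 x.2.2)))
  -- expansion
  | exp1 (A : Set Act) (l₁ l₂ : List (Act × Proc Act)) :
      Deriv (par A (ecPre l₁) (ecPre l₂)) (expTerm A l₁ l₂)
  | exp2 (A : Set Act) (l₁ l₂ : List (Act × Proc Act)) :
      (∀ x ∈ l₁, Basic x.2) → (∀ x ∈ l₂, Basic x.2) →
      Deriv (expTerm A l₁ l₂) (par A (ecPre l₁) (ecPre l₂))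

end Proc

namespace Proc

/-!
Inconsistency is inherited along τ-steps, so a τ-path ending in a consistent state is
consistent throughout, and `p ⇒_F| q` just says that `q` is a consistent stable τ-descendant
of `p`. Each of `□`, `∥_A`, `∧` moves by τ exactly when one of its arguments does, and a
disjunction is never stable; hence the stable τ-descendants of `p₁ ⊙ (p₂ ∨ p₃)` are those of
`p₁ ⊙ p₂` together with those of `p₁ ⊙ p₃`, i.e. those of `(p₁ ⊙ p₂) ∨ (p₁ ⊙ p₃)`. Both sides
therefore have the same `⇒_F|`-descendants, and the identity on stable processes is a stable
ready simulation.
-/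

variable {Act : Type}

abbrev TauStep (p q : Proc Act) : Prop := Trans p ActT.tau q

lemma hasTau_of_trans_tau {t u : Proc Act} (h : Trans t ActT.tau u) : hasTau t := by
  generalize hα : (ActT.tau : ActT Act) = α at h
  induction h <;> simp_all [hasTau]

lemma not_hasTau_of_trans_act {t u : Proc Act} {a : Act} (h : Trans t (ActT.act a) u) :
    ¬ hasTau t := by
  generalize hα : ActT.act a = α at h
  induction h <;> subst_vars <;> simp_all [hasTau]

lemma not_trans_act_of_trans_tau {t u v : Proc Act} {a : Act} (h : Trans t ActT.tau u) :
    ¬ Trans t (ActT.act a) v :=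
  fun h' => not_hasTau_of_trans_act h' (hasTau_of_trans_tau h)

lemma Fp.conj_of_trans_tau {t₁ t₂ u₁ u₂ : Proc Act}
    (h : Trans (conj t₁ t₂) ActT.tau (conj u₁ u₂))
    (h₁ : Fp t₁ → Fp u₁) (h₂ : Fp t₂ → Fp u₂) (hp : Fp (conj t₁ t₂)) :
    Fp (conj u₁ u₂) := by
  cases hp with
  | conjL hp => exact Fp.conjL (h₁ hp)
  | conjR hp => exact Fp.conjR (h₂ hp)
  | conjReady hs _ => exact absurd h (hs _)
  | conjSucc hβ hall =>
    rename_i β _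
    cases β with
    | tau => exact hall _ h
    | act a => exact absurd hβ (not_trans_act_of_trans_tau h)
  | conjStable hall => exact Fp.conjStable fun y hy hs => hall y (hy.head h) hs

theorem Fp.of_trans_tau {p q : Proc Act} (h : Trans p ActT.tau q) (hp : Fp p) : Fp q := by
  generalize hα : (ActT.tau : ActT Act) = α at h
  induction h with
  | pre => subst hα; cases hp; assumption
  | ecTauL h ih => cases hp with
    | ecL hp => exact Fp.ecL (ih hp hα)
    | ecR hp => exact Fp.ecR hp
  | ecTauR h ih => cases hp with
    | ecL hp => exact Fp.ecL hp
    | ecR hp => exact Fp.ecR (ih hp hα)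
  | parTauL h ih => cases hp with
    | parL hp => exact Fp.parL (ih hp hα)
    | parR hp => exact Fp.parR hp
  | parTauR h ih => cases hp with
    | parL hp => exact Fp.parL hp
    | parR hp => exact Fp.parR (ih hp hα)
  | disjL => cases hp; assumption
  | disjR => cases hp; assumption
  | conjTauL h ih => exact Fp.conj_of_trans_tau (Trans.conjTauL h) (ih · hα) id hp
  | conjTauR h ih => exact Fp.conj_of_trans_tau (Trans.conjTauR h) id (ih · hα) hp
  | _ => cases hα

lemma not_Fp_of_reflTransGen {p q : Proc Act} (h : Relation.ReflTransGen TauStep p q)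
    (hq : ¬ Fp q) : ¬ Fp p := by
  induction h using Relation.ReflTransGen.head_induction_on with
  | refl => exact hq
  | head hstep _ ih => exact fun hp => ih (Fp.of_trans_tau hstep hp)

lemma reflTransGen_tauStepF_iff {p q : Proc Act} (hq : ¬ Fp q) :
    Relation.ReflTransGen tauStepF p q ↔ Relation.ReflTransGen TauStep p q := by
  refine ⟨fun h => Relation.ReflTransGen.mono (p := TauStep) (fun _ _ h => h.1) _ _ h,
    fun h => ?_⟩
  induction h using Relation.ReflTransGen.head_induction_on with
  | refl => rfl
  | head hstep hrest ih =>
    have hb := not_Fp_of_reflTransGen hrest hq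
    exact ih.head ⟨hstep, fun ha => hb (Fp.of_trans_tau hstep ha), hb⟩

lemma epsF_iff {p q : Proc Act} :
    epsF p q ↔ Relation.ReflTransGen TauStep p q ∧ ¬ Fp q ∧ Stable q := by
  constructor
  · rintro ⟨h, -, hq, hs⟩
    exact ⟨(reflTransGen_tauStepF_iff hq).1 h, hq, hs⟩
  · rintro ⟨h, hq, hs⟩
    exact ⟨(reflTransGen_tauStepF_iff hq).2 h, not_Fp_of_reflTransGen h hq, hq, hs⟩

lemma rsLT_refl {p : Proc Act} (hp : Stable p) : rsLT p p := by
  refine ⟨fun x y => x = y ∧ Stable x, ?_, rfl, hp⟩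
  rintro x _ ⟨rfl, hx⟩
  refine ⟨hx, hx, id, fun a x' hw => ⟨x', hw, rfl, ?_⟩, fun _ => rfl⟩
  obtain ⟨-, -, -, -, -, -, -, -, -, hs⟩ := hw
  exact hs

lemma rsLE_of_epsF_imp {p q : Proc Act} (h : ∀ r, epsF p r → epsF q r) : rsLE p q :=
  fun r hr => ⟨r, h r hr, rsLT_refl hr.2.2.2⟩

lemma rsEq_of_epsF_iff {p q : Proc Act} (h : ∀ r, epsF p r ↔ epsF q r) : rsEq p q :=
  ⟨rsLE_of_epsF_imp fun r => (h r).1, rsLE_of_epsF_imp fun r => (h r).2⟩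

lemma reflTransGen_disj_iff {a b q : Proc Act} (hq : Stable q) :
    Relation.ReflTransGen TauStep (disj a b) q ↔
      Relation.ReflTransGen TauStep a q ∨ Relation.ReflTransGen TauStep b q := by
  constructor
  · intro h
    rcases h.cases_head with rfl | ⟨c, hstep, hrest⟩
    · exact absurd Trans.disjL (hq _)
    · cases hstep
      exacts [Or.inl hrest, Or.inr hrest]
  · rintro (h | h)
    exacts [h.head Trans.disjL, h.head Trans.disjR]

def TauInterleaving (f : Proc Act → Proc Act → Proc Act) : Prop :=
  ∀ x y z, Trans (f x y) ActT.tau z ↔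
    (∃ x', Trans x ActT.tau x' ∧ z = f x' y) ∨ (∃ y', Trans y ActT.tau y' ∧ z = f x y')

lemma tauInterleaving_ec : TauInterleaving (ec : Proc Act → Proc Act → Proc Act) := by
  refine fun x y z => ⟨fun h => ?_, ?_⟩
  · cases h with
    | ecTauL h => exact Or.inl ⟨_, h, rfl⟩
    | ecTauR h => exact Or.inr ⟨_, h, rfl⟩
  · rintro (⟨x', h, rfl⟩ | ⟨y', h, rfl⟩)
    exacts [Trans.ecTauL h, Trans.ecTauR h]

lemma tauInterleaving_par (A : Set Act) : TauInterleaving (par A) := by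
  refine fun x y z => ⟨fun h => ?_, ?_⟩
  · cases h with
    | parTauL h => exact Or.inl ⟨_, h, rfl⟩
    | parTauR h => exact Or.inr ⟨_, h, rfl⟩
  · rintro (⟨x', h, rfl⟩ | ⟨y', h, rfl⟩)
    exacts [Trans.parTauL h, Trans.parTauR h]

lemma tauInterleaving_conj : TauInterleaving (conj : Proc Act → Proc Act → Proc Act) := by
  refine fun x y z => ⟨fun h => ?_, ?_⟩
  · cases h with
    | conjTauL h => exact Or.inl ⟨_, h, rfl⟩
    | conjTauR h => exact Or.inr ⟨_, h, rfl⟩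
  · rintro (⟨x', h, rfl⟩ | ⟨y', h, rfl⟩)
    exacts [Trans.conjTauL h, Trans.conjTauR h]

namespace TauInterleaving

variable {f : Proc Act → Proc Act → Proc Act}

lemma reflTransGen_disj_right_iff (hf : TauInterleaving f) {x y z q : Proc Act}
    (hq : Stable q) :
    Relation.ReflTransGen TauStep (f x (disj y z)) q ↔
      Relation.ReflTransGen TauStep (f x y) q ∨ Relation.ReflTransGen TauStep (f x z) q := by
  constructor
  · intro h
    generalize hu : f x (disj y z) = u at h
    induction h using Relation.ReflTransGen.head_induction_on generalizing x with
    | refl => exact absurd ((hf _ _ _).2 (Or.inr ⟨y, Trans.disjL, rfl⟩)) (hu ▸ hq _)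
    | head hstep hrest ih =>
      subst hu
      rcases (hf _ _ _).1 hstep with ⟨x', hx, rfl⟩ | ⟨y', hy, rfl⟩
      · have lift : ∀ w, TauStep (f x w) (f x' w) :=
          fun w => (hf _ _ _).2 (Or.inl ⟨x', hx, rfl⟩)
        exact (ih rfl).imp (·.head (lift y)) (·.head (lift z))
      · cases hy
        exacts [Or.inl hrest, Or.inr hrest]
  · have lift : ∀ w, Trans (disj y z) ActT.tau w → TauStep (f x (disj y z)) (f x w) :=
      fun w hw => (hf _ _ _).2 (Or.inr ⟨w, hw, rfl⟩)
    rintro (h | h)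
    exacts [h.head (lift y Trans.disjL), h.head (lift z Trans.disjR)]

theorem rsEq_distrib_disj (hf : TauInterleaving f) (x y z : Proc Act) :
    rsEq (f x (disj y z)) (disj (f x y) (f x z)) := by
  refine rsEq_of_epsF_iff fun r => ?_
  simp only [epsF_iff, and_congr_left_iff]
  rintro ⟨-, hs⟩
  rw [reflTransGen_disj_iff hs, hf.reflTransGen_disj_right_iff hs]

end TauInterleaving

/-- Distributivity over disjunction up to =_RS. -/
theorem stmt7 {Act : Type} (p₁ p₂ p₃ : Proc Act) (A : Set Act) :
    rsEq (ec p₁ (disj p₂ p₃)) (disj (ec p₁ p₂) (ec p₁ p₃)) ∧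
    rsEq (par A p₁ (disj p₂ p₃)) (disj (par A p₁ p₂) (par A p₁ p₃)) ∧
    rsEq (conj p₁ (disj p₂ p₃)) (disj (conj p₁ p₂) (conj p₁ p₃)) :=
  ⟨tauInterleaving_ec.rsEq_distrib_disj p₁ p₂ p₃,
    (tauInterleaving_par A).rsEq_distrib_disj p₁ p₂ p₃,
    tauInterleaving_conj.rsEq_distrib_disj p₁ p₂ p₃⟩

end Proc
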